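/- Under the hypotheses of the previous statement (strictly increasing unbounded sampling sequence {t_k} starting at t₀, continuous ξ, r(t) = ∫_{t_k}^{t} ξ(s) ds on each [t_k, t_{k+1}), ‖ξ(t)‖ ≤ max{β(a, t − t₀), γ(‖r_[t₀,t]‖)} for all t ≥ t₀ with β of class KL and γ of class K∞, γ̄ of class K∞ with γ̄ ≥ ε·γ on (0,∞) for some ε > 1, and (t − t_k)·γ̄(‖r_[t_k,t]‖) ≤ ‖r_[t_k,t]‖ on each inter-sampling interval), assume additionally that for some class KL function β̃ and class K∞ function γ̃, ‖x(t)‖ ≤ max{β̃(‖x(t₀)‖, t − t₀), γ̃(‖r_[t₀,t]‖)} for all t ≥ t₀ and a = ‖x(t₀)‖. Then for all t ≥ t₀: ‖r_[t₀,t]‖ ≤ γ̄⁻¹(β(‖x(t₀)‖, 0)) and ‖x(t)‖ ≤ max{β̃(‖x(t₀)‖, 0), γ̃(γ̄⁻¹(β(‖x(t₀)‖, 0)))}, where γ̄⁻¹ denotes the inverse of γ̄. -/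

import Mathlib

open Filter Set

/-- A function is of class K∞. -/
def IsClassKInf (γ : ℝ → ℝ) : Prop :=
  ContinuousOn γ (Set.Ici 0) ∧ StrictMonoOn γ (Set.Ici 0) ∧ γ 0 = 0 ∧
    Filter.Tendsto γ Filter.atTop Filter.atTop

/-- A function is of class KL. -/
def IsClassKL (β : ℝ → ℝ → ℝ) : Prop :=
  (∀ t, 0 ≤ t → ContinuousOn (fun s => β s t) (Set.Ici 0) ∧
      StrictMonoOn (fun s => β s t) (Set.Ici 0) ∧ β 0 t = 0) ∧
  (∀ s, 0 ≤ s → AntitoneOn (fun t => β s t) (Set.Ici 0) ∧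
      Filter.Tendsto (fun t => β s t) Filter.atTop (nhds 0))

/-- `‖v_[a,b]‖ = sup_{a ≤ τ ≤ b} ‖v τ‖`. -/
noncomputable def supNorm {E : Type*} [NormedAddCommGroup E] (v : ℝ → E) (a b : ℝ) : ℝ :=
  sSup ((fun τ => ‖v τ‖) '' Set.Icc a b)

/-- The next triggering time (in `EReal`, so that `sInf ∅ = ⊤`). -/
noncomputable def triggerTime {E : Type*} [NormedAddCommGroup E]
    (γb : ℝ → ℝ) (r : ℝ → E) (tk : ℝ) : EReal :=
  sInf (((↑) : ℝ → EReal) ''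
    {t : ℝ | tk < t ∧ (t - tk) * γb (supNorm r tk t) = supNorm r tk t ∧ supNorm r tk t ≠ 0})

/-!
On an inter-sampling interval `[t k, u]` inside `[t₀, s]`, `r` grows from `r (t k) = 0` at rate at
most `C = max (β ‖x t₀‖ 0) (γ ‖r_[t₀,s]‖)`, so `‖r_[t k,u]‖ ≤ (u - t k) C`, and the triggering rule
`(u - t k) γ̄ ‖r_[t k,u]‖ ≤ ‖r_[t k,u]‖` forces `γ̄ ‖r_[t k,u]‖ ≤ C`. Hence
`γ̄ ‖r_[t₀,s]‖ ≤ max (β ‖x t₀‖ 0) (γ ‖r_[t₀,s]‖)`; as `γ̄ ≥ ε γ` with `ε > 1`, the second alternative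
only holds when it is harmless, so `‖r_[t₀,s]‖ ≤ γ̄⁻¹ (β ‖x t₀‖ 0)`. The bound on `x` then follows
from its ISS estimate.
-/

section SupNorm

variable {E : Type*} [NormedAddCommGroup E] {v : ℝ → E} {a b c C : ℝ}

theorem supNorm_nonneg : 0 ≤ supNorm v a b :=
  Real.sSup_nonneg <| forall_mem_image.2 fun _ _ => norm_nonneg _

theorem norm_le_supNorm (hv : BddAbove ((fun τ => ‖v τ‖) '' Icc a b)) {τ : ℝ}
    (hτ : τ ∈ Icc a b) : ‖v τ‖ ≤ supNorm v a b :=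
  le_csSup hv (mem_image_of_mem _ hτ)

theorem supNorm_le (hC : 0 ≤ C) (h : ∀ τ ∈ Icc a b, ‖v τ‖ ≤ C) : supNorm v a b ≤ C :=
  Real.sSup_le (forall_mem_image.2 h) hC

theorem supNorm_mono_right (hv : BddAbove ((fun τ => ‖v τ‖) '' Icc a c)) (hab : a ≤ b)
    (hbc : b ≤ c) : supNorm v a b ≤ supNorm v a c :=
  csSup_le_csSup hv ((nonempty_Icc.2 hab).image _) (image_mono (Icc_subset_Icc_right hbc))

end SupNorm

namespace IsClassKL

variable {β : ℝ → ℝ → ℝ} {s t : ℝ}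

theorem nonneg (hβ : IsClassKL β) (hs : 0 ≤ s) (ht : 0 ≤ t) : 0 ≤ β s t := by
  obtain ⟨-, hmono, hzero⟩ := hβ.1 t ht
  exact hzero ▸ hmono.monotoneOn self_mem_Ici hs hs

theorem le_apply_zero (hβ : IsClassKL β) (hs : 0 ≤ s) (ht : 0 ≤ t) : β s t ≤ β s 0 :=
  (hβ.2 s hs).1 self_mem_Ici ht ht

end IsClassKL

theorem apply_le_of_mul_apply_le_of_le_mul {γ : ℝ → ℝ} (hγ0 : γ 0 = 0) {S d C : ℝ}
    (hS : 0 ≤ S) (hC : 0 ≤ C) (hSle : S ≤ d * C) (htrig : d * γ S ≤ S) : γ S ≤ C := by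
  rcases hS.eq_or_lt with rfl | hSpos
  · rwa [hγ0]
  have hd : 0 < d := pos_of_mul_pos_left (hSpos.trans_le hSle) hC
  exact le_of_mul_le_mul_left (htrig.trans hSle) hd

-- Small-gain step: `γ̄ R ≤ γ R` together with `ε γ R ≤ γ̄ R`, `ε > 1`, forces `γ̄ R ≤ 0`.
theorem apply_le_of_apply_le_max_of_one_lt {γ γb : ℝ → ℝ} (hγb0 : γb 0 = 0) {ε : ℝ}
    (hε : 1 < ε) (hγbγ : ∀ s > 0, ε * γ s ≤ γb s) {R b : ℝ} (hR : 0 ≤ R) (hb : 0 ≤ b)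
    (h : γb R ≤ max b (γ R)) : γb R ≤ b := by
  rcases hR.eq_or_lt with rfl | hRpos
  · rwa [hγb0]
  by_contra! hbR
  have hγR : γb R ≤ γ R := (le_max_iff.1 h).resolve_left hbR.not_ge
  nlinarith [hγbγ R hRpos]

theorem exists_mem_Ico_of_tendsto_atTop {α : Type*} [LinearOrder α] [NoMaxOrder α]
    {t : ℕ → α} (hmono : Monotone t) (hunbdd : Tendsto t atTop atTop) {u : α} (hu : t 0 ≤ u) :
    ∃ k, u ∈ Ico (t k) (t (k + 1)) := by
  have hcover := iUnion_Ico_map_succ_eq_Ici (fun k => hmono (Nat.zero_le k))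
    (not_bddAbove_of_tendsto_atTop hunbdd)
  obtain ⟨k, hk⟩ := mem_iUnion.1 (hcover ▸ hu : u ∈ ⋃ k, Ico (t k) (t (Order.succ k)))
  exact ⟨k, by simpa only [Order.succ_eq_add_one] using hk⟩

section Sampled

variable {E : Type*} [NormedAddCommGroup E] [NormedSpace ℝ E] {ξ r : ℝ → E} {t : ℕ → ℝ}
  {t0 : ℝ}

theorem norm_le_mul_of_mem_Ico (hr : ∀ k, ∀ s ∈ Ico (t k) (t (k + 1)), r s = ∫ τ in (t k)..s, ξ τ)
    {k : ℕ} {v C : ℝ} (hv : v ∈ Ico (t k) (t (k + 1))) (hξ : ∀ y ∈ Icc (t k) v, ‖ξ y‖ ≤ C) :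
    ‖r v‖ ≤ (v - t k) * C := by
  rw [hr k v hv, mul_comm, ← abs_of_nonneg (sub_nonneg.2 hv.1)]
  refine intervalIntegral.norm_integral_le_of_norm_le_const fun y hy => hξ y ?_
  rw [uIoc_of_le hv.1] at hy
  exact Ioc_subset_Icc_self hy

variable (ht0 : t 0 = t0) (hmono : Monotone t) (hunbdd : Tendsto t atTop atTop)
  (hr : ∀ k, ∀ s ∈ Ico (t k) (t (k + 1)), r s = ∫ τ in (t k)..s, ξ τ)
include ht0 hmono hunbdd hr

theorem bddAbove_norm_image_Icc (hξ : ContinuousOn ξ (Ici t0)) (s : ℝ) :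
    BddAbove ((fun τ => ‖r τ‖) '' Icc t0 s) := by
  obtain ⟨M, hM⟩ := isCompact_Icc.exists_bound_of_continuousOn (hξ.mono
    (Icc_subset_Ici_self : Icc t0 s ⊆ Ici t0))
  refine ⟨(s - t0) * max M 0, forall_mem_image.2 fun u hu => ?_⟩
  obtain ⟨k, hk⟩ := exists_mem_Ico_of_tendsto_atTop hmono hunbdd (ht0 ▸ hu.1)
  have htk : t0 ≤ t k := ht0 ▸ hmono (Nat.zero_le k)
  calc ‖r u‖ ≤ (u - t k) * max M 0 := norm_le_mul_of_mem_Ico hr hk fun y hy =>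
        (hM y ⟨htk.trans hy.1, hy.2.trans hu.2⟩).trans (le_max_left _ _)
    _ ≤ (s - t0) * max M 0 := by gcongr; linarith [hu.2]

theorem supNorm_le_of_forall_norm_le_apply {γb : ℝ → ℝ}
    (htrig : ∀ k, ∀ τ ∈ Ico (t k) (t (k + 1)),
      (τ - t k) * γb (supNorm r (t k) τ) ≤ supNorm r (t k) τ)
    (hγb : StrictMonoOn γb (Ici 0)) (hγb0 : γb 0 = 0) {s c : ℝ} (hc : 0 ≤ c)
    (hξ : ∀ y ∈ Icc t0 s, ‖ξ y‖ ≤ γb c) : supNorm r t0 s ≤ c := by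
  have hC : 0 ≤ γb c := hγb0 ▸ hγb.monotoneOn self_mem_Ici hc hc
  refine supNorm_le hc fun u hu => ?_
  obtain ⟨k, hk⟩ := exists_mem_Ico_of_tendsto_atTop hmono hunbdd (ht0 ▸ hu.1)
  have htk : t0 ≤ t k := ht0 ▸ hmono (Nat.zero_le k)
  have hgrowth : ∀ v ∈ Icc (t k) u, ‖r v‖ ≤ (u - t k) * γb c := fun v hv =>
    (norm_le_mul_of_mem_Ico hr ⟨hv.1, hv.2.trans_lt hk.2⟩ fun y hy =>
      hξ y ⟨htk.trans hy.1, hy.2.trans (hv.2.trans hu.2)⟩).trans (by gcongr; exact hv.2)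
  have hru : ‖r u‖ ≤ supNorm r (t k) u :=
    norm_le_supNorm ⟨_, forall_mem_image.2 hgrowth⟩ ⟨hk.1, le_rfl⟩
  have hS : γb (supNorm r (t k) u) ≤ γb c := apply_le_of_mul_apply_le_of_le_mul hγb0
    supNorm_nonneg hC (supNorm_le (mul_nonneg (sub_nonneg.2 hk.1) hC) hgrowth) (htrig k u hk)
  exact (hγb.le_iff_le (norm_nonneg _) hc).1
    ((hγb.monotoneOn (norm_nonneg _) supNorm_nonneg hru).trans hS)

end Sampled

theorem aux_input_and_state_bounds_general {n m : ℕ} (t0 : ℝ) (t : ℕ → ℝ) (ht0 : t 0 = t0)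
    (hmono : StrictMono t) (hunbdd : Filter.Tendsto t Filter.atTop Filter.atTop)
    (x : ℝ → EuclideanSpace ℝ (Fin n))
    (ξ r : ℝ → EuclideanSpace ℝ (Fin m)) (hξcont : ContinuousOn ξ (Set.Ici t0))
    (hr : ∀ k : ℕ, ∀ s ∈ Set.Ico (t k) (t (k + 1)), r s = ∫ τ in (t k)..s, ξ τ)
    (β βt : ℝ → ℝ → ℝ) (hβ : IsClassKL β) (hβt : IsClassKL βt)
    (γ γt γb : ℝ → ℝ) (hγ : IsClassKInf γ) (hγt : IsClassKInf γt) (hγb : IsClassKInf γb)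
    (ε : ℝ) (hε : 1 < ε) (hγbγ : ∀ s > 0, ε * γ s ≤ γb s)
    (hbound : ∀ τ, t0 ≤ τ → ‖ξ τ‖ ≤ max (β ‖x t0‖ (τ - t0)) (γ (supNorm r t0 τ)))
    (htrig : ∀ k : ℕ, ∀ τ ∈ Set.Ico (t k) (t (k + 1)),
      (τ - t k) * γb (supNorm r (t k) τ) ≤ supNorm r (t k) τ)
    (hISS : ∀ τ, t0 ≤ τ → ‖x τ‖ ≤ max (βt ‖x t0‖ (τ - t0)) (γt (supNorm r t0 τ)))
    -- γ̄⁻¹ : the inverse of γ̄ on [0,∞)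
    (γbinv : ℝ → ℝ)
    (hinv2 : ∀ s, 0 ≤ s → 0 ≤ γbinv s ∧ γb (γbinv s) = s) :
    ∀ τ, t0 ≤ τ →
      supNorm r t0 τ ≤ γbinv (β ‖x t0‖ 0) ∧
      ‖x τ‖ ≤ max (βt ‖x t0‖ 0) (γt (γbinv (β ‖x t0‖ 0))) := by
  obtain ⟨-, hγb_mono, hγb0, -⟩ := hγb
  set a := ‖x t0‖
  have hβa : 0 ≤ β a 0 := hβ.nonneg (norm_nonneg _) le_rfl
  have hγb_le_iff : ∀ {s b : ℝ}, 0 ≤ s → 0 ≤ b → (γb s ≤ b ↔ s ≤ γbinv b) := fun hs hb => by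
    conv_lhs => rw [← (hinv2 _ hb).2]
    exact hγb_mono.le_iff_le hs (hinv2 _ hb).1
  have hbdd := bddAbove_norm_image_Icc ht0 hmono.monotone hunbdd hr hξcont
  have hgain : ∀ s, t0 ≤ s →
      γb (supNorm r t0 s) ≤ max (β a 0) (γ (supNorm r t0 s)) := fun s hs => by
    have hC : 0 ≤ max (β a 0) (γ (supNorm r t0 s)) := hβa.trans (le_max_left _ _)
    refine (hγb_le_iff supNorm_nonneg hC).2 <| supNorm_le_of_forall_norm_le_apply ht0
      hmono.monotone hunbdd hr htrig hγb_mono hγb0 (hinv2 _ hC).1 fun y hy => ?_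
    rw [(hinv2 _ hC).2]
    exact (hbound y hy.1).trans <| max_le_max
      (hβ.le_apply_zero (norm_nonneg _) (sub_nonneg.2 hy.1))
      (hγ.2.1.monotoneOn supNorm_nonneg supNorm_nonneg (supNorm_mono_right (hbdd s) hy.1 hy.2))
  have hR : ∀ s, t0 ≤ s → supNorm r t0 s ≤ γbinv (β a 0) := fun s hs =>
    (hγb_le_iff supNorm_nonneg hβa).1 <|
      apply_le_of_apply_le_max_of_one_lt hγb0 hε hγbγ supNorm_nonneg hβa (hgain s hs)
  intro τ hτ
  refine ⟨hR τ hτ, (hISS τ hτ).trans (max_le_max ?_ ?_)⟩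
  · exact hβt.le_apply_zero (norm_nonneg _) (sub_nonneg.2 hτ)
  · exact hγt.2.1.monotoneOn supNorm_nonneg (hinv2 _ hβa).1 (hR τ hτ)

/-- Explicit bounds on the auxiliary input `r` and the state `x` in the proof of
Theorem 1, from which Lyapunov stability of the origin follows. -/
theorem aux_input_and_state_bounds {n m : ℕ} (t0 : ℝ) (t : ℕ → ℝ) (ht0 : t 0 = t0)
    (hmono : StrictMono t) (hunbdd : Filter.Tendsto t Filter.atTop Filter.atTop)
    (x : ℝ → EuclideanSpace ℝ (Fin n))
    (ξ r : ℝ → EuclideanSpace ℝ (Fin m)) (hξcont : ContinuousOn ξ (Set.Ici t0))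
    (hr : ∀ k : ℕ, ∀ s ∈ Set.Ico (t k) (t (k + 1)), r s = ∫ τ in (t k)..s, ξ τ)
    (β βt : ℝ → ℝ → ℝ) (hβ : IsClassKL β) (hβt : IsClassKL βt)
    (γ γt γb : ℝ → ℝ) (hγ : IsClassKInf γ) (hγt : IsClassKInf γt) (hγb : IsClassKInf γb)
    (ε : ℝ) (hε : 1 < ε) (hγbγ : ∀ s > 0, ε * γ s ≤ γb s)
    (hbound : ∀ τ, t0 ≤ τ → ‖ξ τ‖ ≤ max (β ‖x t0‖ (τ - t0)) (γ (supNorm r t0 τ)))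
    (htrig : ∀ k : ℕ, ∀ τ ∈ Set.Ico (t k) (t (k + 1)),
      (τ - t k) * γb (supNorm r (t k) τ) ≤ supNorm r (t k) τ)
    (hISS : ∀ τ, t0 ≤ τ → ‖x τ‖ ≤ max (βt ‖x t0‖ (τ - t0)) (γt (supNorm r t0 τ)))
    -- γ̄⁻¹ : the inverse of γ̄ on [0,∞)
    (γbinv : ℝ → ℝ) (hinv1 : ∀ s, 0 ≤ s → γbinv (γb s) = s)
    (hinv2 : ∀ s, 0 ≤ s → 0 ≤ γbinv s ∧ γb (γbinv s) = s) :
    ∀ τ, t0 ≤ τ →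
      supNorm r t0 τ ≤ γbinv (β ‖x t0‖ 0) ∧
      ‖x τ‖ ≤ max (βt ‖x t0‖ 0) (γt (γbinv (β ‖x t0‖ 0))) :=
  aux_input_and_state_bounds_general t0 t ht0 hmono hunbdd x ξ r hξcont hr β βt hβ hβt γ γt γb hγ
    hγt hγb ε hε hγbγ hbound htrig hISS γbinv hinv2
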